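/- arXiv:1604.01502 — 2 statements merged into one kernel-verified Lean document; each statement's English description precedes it below -/
import Mathlib

section
/- Let P be a set of m points in ℝ³ and let S be a finite set of n pairwise distinct spheres in ℝ³ such that no sphere of S is strongly degenerate with respect to P, i.e., for every s ∈ S the set P ∩ s is not contained in any single circle. Then the number of incidences satisfies I(P,S) ≤ m⁴ + 3n. -/
open scoped BigOperators

noncomputable section

abbrev E3 : Type := EuclideanSpace ℝ (Fin 3)

/-- A sphere in ℝ³: the set of points at a fixed positive distance (the radius)
from a fixed center. -/
def IsSphere (s : Set E3) : Prop :=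
  ∃ (o : E3) (r : ℝ), 0 < r ∧ s = Metric.sphere o r

/-- A plane in ℝ³. -/
def IsPlane (π : Set E3) : Prop :=
  ∃ (a u : E3), ‖u‖ = 1 ∧ π = {x : E3 | inner ℝ (x - a) u = (0 : ℝ)}

/-- A circle in ℝ³: the intersection of a sphere with a plane whose distance
from the sphere's center is less than the radius. -/
def IsCircle (c : Set E3) : Prop :=
  ∃ (o : E3) (r : ℝ) (π : Set E3), 0 < r ∧ IsPlane π ∧
    Metric.infDist o π < r ∧ c = Metric.sphere o r ∩ π

/-- The real zero set in ℝ³ of a polynomial in three variables. -/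
def zeroSet (f : MvPolynomial (Fin 3) ℝ) : Set E3 :=
  {x : E3 | MvPolynomial.eval (fun i => x i) f = 0}

/-- An algebraic surface of degree `D` in ℝ³. -/
def IsAlgSurf (D : ℕ) (V : Set E3) : Prop :=
  ∃ f : MvPolynomial (Fin 3) ℝ, f ≠ 0 ∧ f.totalDegree = D ∧ V = zeroSet f

/-- An algebraic surface of degree `D` in ℝ³ with no linear or spherical components. -/
def IsAlgSurfNLS (D : ℕ) (V : Set E3) : Prop :=
  ∃ f : MvPolynomial (Fin 3) ℝ, f ≠ 0 ∧ f.totalDegree = D ∧ V = zeroSet f ∧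
    ∀ g : MvPolynomial (Fin 3) ℝ, Irreducible g → g ∣ f →
      ¬ IsPlane (zeroSet g) ∧ ¬ IsSphere (zeroSet g)

/-- The (edge set of the) incidence graph between points and spheres. -/
def IncSet (P : Set E3) (S : Set (Set E3)) : Set (E3 × Set E3) :=
  {ps : E3 × Set E3 | ps.1 ∈ P ∧ ps.2 ∈ S ∧ ps.1 ∈ ps.2}

/-!
If the points of `P` on a sphere `s` are not cocircular, they affinely span ℝ³, because a plane
meets `s` in a circle, a single point or nothing. Hence every incidence `(p, s)` extends to a
quadruple `(p, x, y, z)` of points of `P ∩ s` spanning ℝ³ affinely. Four such points determine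
the sphere through them, so `(p, s) ↦ (p, x, y, z)` is injective into `P⁴` and `I(P, S) ≤ m⁴`.
-/

open Metric

section InnerProductSpace

variable {V : Type*} [NormedAddCommGroup V] [InnerProductSpace ℝ V]

theorem exists_norm_eq_one_mem_orthogonal (W : Submodule ℝ V) [W.HasOrthogonalProjection]
    (hW : W ≠ ⊤) : ∃ u : V, ‖u‖ = 1 ∧ u ∈ Wᗮ := by
  obtain ⟨v, hv, hv0⟩ := Submodule.exists_mem_ne_zero_of_ne_bot
    (mt Submodule.orthogonal_eq_bot_iff.mp hW)
  exact ⟨‖v‖⁻¹ • v, by simp [norm_smul, hv0], Submodule.smul_mem _ _ hv⟩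

theorem sphere_eq_of_subset_of_affineSpan_eq_top {X : Set V} (hX : affineSpan ℝ X = ⊤)
    {o₁ o₂ : V} {r₁ r₂ : ℝ} (h₁ : X ⊆ sphere o₁ r₁) (h₂ : X ⊆ sphere o₂ r₂) :
    sphere o₁ r₁ = sphere o₂ r₂ := by
  have hperp : vectorSpan ℝ X ≤ (ℝ ∙ (o₂ - o₁))ᗮ := by
    rw [vectorSpan_def, Submodule.span_le]
    rintro _ ⟨x, hx, y, hy, rfl⟩
    rw [SetLike.mem_coe, Submodule.mem_orthogonal_singleton_iff_inner_right]
    exact EuclideanGeometry.inner_vsub_vsub_of_dist_eq_of_dist_eq (p₁ := y) (p₂ := x)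
      ((h₁ hy).trans (h₁ hx).symm) ((h₂ hy).trans (h₂ hx).symm)
  rw [← direction_affineSpan, hX, AffineSubspace.direction_top, top_le_iff,
    Submodule.orthogonal_eq_top_iff, Submodule.span_singleton_eq_bot, sub_eq_zero] at hperp
  obtain ⟨x, hx⟩ := (AffineSubspace.nonempty_of_affineSpan_eq_top ℝ V V hX)
  have hr : r₁ = r₂ := (h₁ hx).symm.trans (hperp ▸ h₂ hx)
  rw [hperp, hr]

end InnerProductSpace

theorem sphere_inter_subsingleton_of_le_infDist {E : Type*} [NormedAddCommGroup E]
    [NormedSpace ℝ E] [StrictConvexSpace ℝ E] {π : Set E} (hπ : Convex ℝ π) {o : E} {r : ℝ}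
    (h : r ≤ infDist o π) : (sphere o r ∩ π).Subsingleton := by
  rintro x ⟨hxs, hxπ⟩ y ⟨hys, hyπ⟩
  by_contra hne
  have hhalf : (0 : ℝ) < 1 / 2 := by norm_num
  have hmid : (1 / 2 : ℝ) • x + (1 / 2 : ℝ) • y ∈ ball o r :=
    combo_mem_ball_of_ne (sphere_subset_closedBall hxs) (sphere_subset_closedBall hys) hne
      hhalf hhalf (by norm_num)
  have := infDist_le_dist_of_mem (x := o) (hπ hxπ hyπ hhalf.le hhalf.le (by norm_num))
  rw [mem_ball, dist_comm] at hmid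
  linarith

theorem IsPlane.convex {π : Set E3} (hπ : IsPlane π) : Convex ℝ π := by
  obtain ⟨a, u, -, rfl⟩ := hπ
  intro x hx y hy s t _ _ hst
  have hcomb : s • x + t • y - a = s • (x - a) + t • (y - a) := by
    nth_rewrite 1 [← one_smul ℝ a, ← hst]
    module
  change inner ℝ _ u = 0 at hx hy ⊢
  rw [hcomb, inner_add_left, real_inner_smul_left, real_inner_smul_left, hx, hy, mul_zero,
    mul_zero, add_zero]

theorem affineSpan_ne_top_of_collinear {T : Set E3} (hT : Collinear ℝ T) :
    affineSpan ℝ T ≠ ⊤ := by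
  intro htop
  have := hT.finrank_le_one
  rw [← direction_affineSpan, htop, AffineSubspace.direction_top, finrank_top,
    finrank_euclideanSpace_fin] at this
  omega

theorem exists_isPlane_superset_of_affineSpan_ne_top {T : Set E3} (hT : affineSpan ℝ T ≠ ⊤) :
    ∃ π, IsPlane π ∧ T ⊆ π := by
  rcases T.eq_empty_or_nonempty with rfl | ⟨a, ha⟩
  · obtain ⟨u, hu, -⟩ := exists_norm_eq_one_mem_orthogonal (⊥ : Submodule ℝ E3) bot_ne_top
    exact ⟨_, ⟨0, u, hu, rfl⟩, Set.empty_subset _⟩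
  · rw [Ne, AffineSubspace.affineSpan_eq_top_iff_vectorSpan_eq_top_of_nonempty ℝ E3 E3 ⟨a, ha⟩]
      at hT
    obtain ⟨u, hu, huW⟩ := exists_norm_eq_one_mem_orthogonal _ hT
    exact ⟨_, ⟨a, u, hu, rfl⟩, fun p hp =>
      Submodule.inner_right_of_mem_orthogonal (vsub_mem_vectorSpan ℝ hp ha) huW⟩

theorem exists_isCircle_mem_of_mem_sphere {o a : E3} {r : ℝ} (hr : 0 < r)
    (ha : a ∈ sphere o r) : ∃ c, IsCircle c ∧ a ∈ c := by
  obtain ⟨π, hπ, hoa⟩ := exists_isPlane_superset_of_affineSpan_ne_top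
    (affineSpan_ne_top_of_collinear (collinear_pair ℝ o a))
  refine ⟨_, ⟨o, r, π, hr, hπ, ?_, rfl⟩, ha, hoa (by simp)⟩
  rwa [infDist_zero_of_mem (hoa (by simp))]

theorem exists_isCircle_superset_of_subset_isPlane {T π : Set E3} {o : E3} {r : ℝ}
    (hr : 0 < r) (hπ : IsPlane π) (hT : T ⊆ sphere o r ∩ π) : ∃ c, IsCircle c ∧ T ⊆ c := by
  by_cases hdist : infDist o π < r
  · exact ⟨_, ⟨o, r, π, hr, hπ, hdist, rfl⟩, hT⟩
  · have hsub : (sphere o r ∩ π).Subsingleton :=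
      sphere_inter_subsingleton_of_le_infDist hπ.convex (not_lt.mp hdist)
    obtain ⟨a, ha, hTa⟩ : ∃ a ∈ sphere o r, T ⊆ {a} := by
      rcases T.eq_empty_or_nonempty with rfl | ⟨a, haT⟩
      · obtain ⟨a, ha⟩ := (NormedSpace.sphere_nonempty (x := o)).mpr hr.le
        exact ⟨a, ha, Set.empty_subset _⟩
      · exact ⟨a, (hT haT).1, fun b hb => hsub (hT hb) (hT haT)⟩
    obtain ⟨c, hc, hac⟩ := exists_isCircle_mem_of_mem_sphere hr ha
    exact ⟨c, hc, hTa.trans (Set.singleton_subset_iff.mpr hac)⟩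

theorem affineSpan_eq_top_of_forall_not_subset_isCircle {T : Set E3} {o : E3} {r : ℝ}
    (hr : 0 < r) (hT : T ⊆ sphere o r) (hdeg : ¬ ∃ c, IsCircle c ∧ T ⊆ c) :
    affineSpan ℝ T = ⊤ := by
  by_contra hne
  obtain ⟨π, hπ, hTπ⟩ := exists_isPlane_superset_of_affineSpan_ne_top hne
  exact hdeg (exists_isCircle_superset_of_subset_isPlane hr hπ (Set.subset_inter hT hTπ))

theorem IsSphere.eq_of_subset_of_affineSpan_eq_top {s s' X : Set E3} (hs : IsSphere s)
    (hs' : IsSphere s') (hX : affineSpan ℝ X = ⊤) (h : X ⊆ s) (h' : X ⊆ s') : s = s' := by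
  obtain ⟨o, r, -, rfl⟩ := hs
  obtain ⟨o', r', -, rfl⟩ := hs'
  exact sphere_eq_of_subset_of_affineSpan_eq_top hX h h'

theorem exists_affineSpan_insert_eq_top {T : Set E3} {p : E3} (hp : p ∈ T)
    (hT : affineSpan ℝ T = ⊤) : ∃ x ∈ T, ∃ y ∈ T, ∃ z ∈ T, affineSpan ℝ {p, x, y, z} = ⊤ := by
  have hspan : Submodule.span ℝ ((· -ᵥ p) '' T) = ⊤ := by
    rw [← vectorSpan_eq_span_vsub_set_right ℝ hp]
    exact AffineSubspace.vectorSpan_eq_top_of_affineSpan_eq_top ℝ E3 E3 hT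
  obtain ⟨t, htT, hcard, htspan, -⟩ :=
    Submodule.exists_finset_span_eq_linearIndepOn ℝ ((· -ᵥ p) '' T)
  rw [hspan, finrank_top, finrank_euclideanSpace_fin] at hcard
  obtain ⟨u, v, w, -, -, -, rfl⟩ := Finset.card_eq_three.mp hcard
  simp only [Finset.coe_insert, Finset.coe_singleton, Set.insert_subset_iff,
    Set.singleton_subset_iff] at htT
  obtain ⟨⟨x, hx, rfl⟩, ⟨y, hy, rfl⟩, ⟨z, hz, rfl⟩⟩ := htT
  refine ⟨x, hx, y, hy, z, hz, ?_⟩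
  rw [AffineSubspace.affineSpan_eq_top_iff_vectorSpan_eq_top_of_nonempty ℝ E3 E3
      (Set.insert_nonempty _ _), vectorSpan_eq_span_vsub_set_right ℝ (Set.mem_insert p _),
    eq_top_iff, ← hspan, ← htspan]
  apply Submodule.span_mono
  intro v hv
  simp only [Finset.coe_insert, Finset.coe_singleton, Set.mem_insert_iff,
    Set.mem_singleton_iff] at hv
  rcases hv with rfl | rfl | rfl <;> exact ⟨_, by simp, rfl⟩

theorem stmt_8_general (P : Set E3) (S : Set (Set E3)) (m n : ℕ)
    (hPfin : P.Finite) (hm : P.ncard = m)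
    (hS : ∀ s ∈ S, IsSphere s)
    (hdeg : ∀ s ∈ S, ¬ ∃ c : Set E3, IsCircle c ∧ P ∩ s ⊆ c) :
    (IncSet P S).ncard ≤ m ^ 4 + 3 * n := by
  have hframe : ∀ e ∈ IncSet P S, ∃ q : E3 × E3 × E3,
      (q.1 ∈ P ∩ e.2 ∧ q.2.1 ∈ P ∩ e.2 ∧ q.2.2 ∈ P ∩ e.2) ∧
      affineSpan ℝ {e.1, q.1, q.2.1, q.2.2} = ⊤ := by
    rintro ⟨p, s⟩ ⟨hp, hs, hps⟩
    obtain ⟨o, r, hr, rfl⟩ := hS s hs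
    obtain ⟨x, hx, y, hy, z, hz, hspan⟩ := exists_affineSpan_insert_eq_top (Set.mem_inter hp hps)
      (affineSpan_eq_top_of_forall_not_subset_isCircle hr Set.inter_subset_right (hdeg _ hs))
    exact ⟨(x, y, z), ⟨hx, hy, hz⟩, hspan⟩
  choose! F hF using hframe
  have hmaps : ∀ e ∈ IncSet P S, (e.1, F e) ∈ P ×ˢ P ×ˢ P ×ˢ P := fun e he =>
    Set.mk_mem_prod he.1 <| Set.mk_mem_prod (hF e he).1.1.1 <|
      Set.mk_mem_prod (hF e he).1.2.1.1 (hF e he).1.2.2.1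
  have hinj : Set.InjOn (fun e => (e.1, F e)) (IncSet P S) := by
    rintro ⟨p, s⟩ he ⟨p', s'⟩ he' heq
    obtain ⟨rfl, hFeq⟩ := Prod.ext_iff.mp heq
    obtain ⟨⟨hx, hy, hz⟩, hspan⟩ := hF _ he
    obtain ⟨⟨hx', hy', hz'⟩, -⟩ := hF _ he'
    simp only at hFeq hx hy hz hspan hx' hy' hz'
    rw [← hFeq] at hx' hy' hz'
    congr
    exact (hS s he.2.1).eq_of_subset_of_affineSpan_eq_top (hS s' he'.2.1) hspan
      (by simp [Set.insert_subset_iff, he.2.2, hx.2, hy.2, hz.2])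
      (by simp [Set.insert_subset_iff, he'.2.2, hx'.2, hy'.2, hz'.2])
  calc (IncSet P S).ncard ≤ (P ×ˢ P ×ˢ P ×ˢ P).ncard :=
        Set.ncard_le_ncard_of_injOn _ hmaps hinj (hPfin.prod (hPfin.prod (hPfin.prod hPfin)))
    _ = m ^ 4 := by simp only [Set.ncard_prod, hm]; ring
    _ ≤ m ^ 4 + 3 * n := Nat.le_add_right _ _

/-- Incidences with spheres none of which is strongly degenerate: at most m⁴ + 3n. -/
theorem stmt_8 (P : Set E3) (S : Set (Set E3)) (m n : ℕ)
    (hPfin : P.Finite) (hm : P.ncard = m)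
    (hSfin : S.Finite) (hn : S.ncard = n)
    (hS : ∀ s ∈ S, IsSphere s)
    (hdeg : ∀ s ∈ S, ¬ ∃ c : Set E3, IsCircle c ∧ P ∩ s ⊆ c) :
    (IncSet P S).ncard ≤ m ^ 4 + 3 * n :=
  stmt_8_general P S m n hPfin hm hS hdeg
end
end

section
/- Let σ ⊂ ℝᵈ be the interior of the convex hull of d+1 affinely independent points v₀, …, v_d, let f be the convex hull of a nonempty subset of {v₀, …, v_d} (a face of the simplex), and let H ⊂ ℝᵈ be an affine hyperplane that contains a point of the relative interior of f but does not contain f. Then H intersects σ. -/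
/-!
Write `H = {g = α}` for a linear functional `g`, and let `p ∈ H` lie in the relative
interior of the face `f`. Since `f ⊄ H` there is `q ∈ f` with `g q ≠ α`; prolonging the segment
from `q` through `p` slightly beyond `p` stays in `f`, because `p` is interior in the affine span
of `f`. So `f` has points strictly on both sides of `H`. The open simplex is nonempty (the vertices
span `ℝᵈ`), convex and dense in the closed simplex, so it too has points on both sides of `H`, and
being connected it meets `H`.
-/

open Set AffineMap

variable {E : Type*} [AddCommGroup E] [Module ℝ E] [TopologicalSpace E] [IsTopologicalAddGroup E]
  [ContinuousSMul ℝ E]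

theorem exists_mem_openSegment_of_mem_intrinsicInterior {s : Set E} {p q : E}
    (hp : p ∈ intrinsicInterior ℝ s) (hq : q ∈ s) : ∃ r ∈ s, p ∈ openSegment ℝ q r := by
  obtain ⟨p, hp_int, rfl⟩ := mem_intrinsicInterior.1 hp
  have hq_span : q ∈ affineSpan ℝ s := subset_affineSpan ℝ s hq
  let γ : ℝ → affineSpan ℝ s := fun t => ⟨lineMap q p t, lineMap_mem t hq_span p.2⟩
  have hγ : Continuous γ := lineMap_continuous.subtype_mk _
  have hγ_one : γ 1 = p := Subtype.ext (lineMap_apply_one q p)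
  obtain ⟨t, ht, hγt⟩ := (hγ.tendsto' 1 p hγ_one).eventually_mem
    (isOpen_interior.mem_nhds hp_int) |>.exists_gt
  refine ⟨γ t, (interior_subset hγt : γ t ∈ ((↑) ⁻¹' s : Set (affineSpan ℝ s))), ?_⟩
  convert lineMap_mem_openSegment ℝ q (γ t : E)
    ⟨inv_pos.2 (zero_lt_one.trans ht), inv_lt_one_of_one_lt₀ ht⟩
  simp only [γ, lineMap_apply_module, smul_add, smul_smul]
  have ht₀ : t ≠ 0 := (zero_lt_one.trans ht).ne'
  match_scalars <;> field_simp; ring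

theorem Convex.inter_interior_nonempty_of_isOpen {s U : Set E} (hs : Convex ℝ s)
    (hs_int : (interior s).Nonempty) (hU : IsOpen U) (hsU : (s ∩ U).Nonempty) :
    (interior s ∩ U).Nonempty := by
  obtain ⟨x, hxs, hxU⟩ := hsU
  have hx : x ∈ closure (interior s) :=
    (hs.closure_interior_eq_closure_of_nonempty_interior hs_int).symm ▸ subset_closure hxs
  rw [inter_comm]
  exact mem_closure_iff.1 hx U hU hxU

theorem Convex.exists_mem_interior_eq_of_lt_of_lt {s : Set E} (hs : Convex ℝ s)
    (hs_int : (interior s).Nonempty) {g : E → ℝ} (hg : Continuous g) {x y : E} {α : ℝ}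
    (hx : x ∈ s) (hy : y ∈ s) (hxα : g x < α) (hαy : α < g y) :
    ∃ z ∈ interior s, g z = α := by
  obtain ⟨x', hx', hx'α⟩ := hs.inter_interior_nonempty_of_isOpen hs_int
    (isOpen_lt hg continuous_const) ⟨x, hx, hxα⟩
  obtain ⟨y', hy', hαy'⟩ := hs.inter_interior_nonempty_of_isOpen hs_int
    (isOpen_lt continuous_const hg) ⟨y, hy, hαy⟩
  exact hs.interior.isPreconnected.intermediate_value hx' hy' hg.continuousOn
    ⟨hx'α.le, hαy'.le⟩

theorem stmt_13_general (d : ℕ) (v : Fin (d + 1) → EuclideanSpace ℝ (Fin d))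
    (hv : AffineIndependent ℝ v)
    (t : Set (Fin (d + 1)))
    (H : Set (EuclideanSpace ℝ (Fin d)))
    (hH : ∃ (u : EuclideanSpace ℝ (Fin d)) (α : ℝ), u ≠ 0 ∧
      H = {x : EuclideanSpace ℝ (Fin d) | inner ℝ x u = α})
    (hmeet : (H ∩ intrinsicInterior ℝ (convexHull ℝ (v '' t))).Nonempty)
    (hnotcont : ¬ convexHull ℝ (v '' t) ⊆ H) :
    (H ∩ interior (convexHull ℝ (Set.range v))).Nonempty := by
  obtain ⟨u, α, -, rfl⟩ := hH
  let g := innerSL ℝ u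
  have hg (x) : inner ℝ x u = g x := real_inner_comm u x
  simp only [hg] at hmeet hnotcont ⊢
  obtain ⟨p, hpH : g p = α, hp⟩ := hmeet
  obtain ⟨q, hq, hqH : g q ≠ α⟩ := not_subset.1 hnotcont
  obtain ⟨r, hr, hpqr⟩ := exists_mem_openSegment_of_mem_intrinsicInterior hp hq
  have hα : α ∈ openSegment ℝ (g q) (g r) := by
    rw [← hpH]
    exact image_openSegment ℝ (g : EuclideanSpace ℝ (Fin d) →ₗ[ℝ] ℝ).toAffineMap q r ▸
      mem_image_of_mem _ hpqr
  have hqr : g q ≠ g r := by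
    rintro hqr
    rw [hqr, openSegment_same] at hα
    exact hqH (hqr.trans hα.symm)
  have hsimplex : (interior (convexHull ℝ (range v))).Nonempty :=
    interior_convexHull_nonempty_iff_affineSpan_eq_top.2
      (hv.affineSpan_eq_top_iff_card_eq_finrank_add_one.2 (by simp))
  have hfS : convexHull ℝ (v '' t) ⊆ convexHull ℝ (range v) :=
    convexHull_mono (image_subset_range v t)
  obtain ⟨z, hz, hzα⟩ : ∃ z ∈ interior (convexHull ℝ (range v)), g z = α := by
    rcases hqr.lt_or_gt with h | h
    · rw [openSegment_eq_Ioo h] at hα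
      exact (convex_convexHull ℝ _).exists_mem_interior_eq_of_lt_of_lt hsimplex g.continuous
        (hfS hq) (hfS hr) hα.1 hα.2
    · rw [openSegment_symm, openSegment_eq_Ioo h] at hα
      exact (convex_convexHull ℝ _).exists_mem_interior_eq_of_lt_of_lt hsimplex g.continuous
        (hfS hr) (hfS hq) hα.1 hα.2
  exact ⟨z, hzα, hz⟩

/-- If an affine hyperplane H in ℝᵈ meets the relative interior of a face f of a
simplex but does not contain f, then H meets the open simplex (the interior of the
convex hull of the vertices). -/
theorem stmt_13 (d : ℕ) (v : Fin (d + 1) → EuclideanSpace ℝ (Fin d))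
    (hv : AffineIndependent ℝ v)
    (t : Set (Fin (d + 1))) (ht : t.Nonempty)
    (H : Set (EuclideanSpace ℝ (Fin d)))
    (hH : ∃ (u : EuclideanSpace ℝ (Fin d)) (α : ℝ), u ≠ 0 ∧
      H = {x : EuclideanSpace ℝ (Fin d) | inner ℝ x u = α})
    (hmeet : (H ∩ intrinsicInterior ℝ (convexHull ℝ (v '' t))).Nonempty)
    (hnotcont : ¬ convexHull ℝ (v '' t) ⊆ H) :
    (H ∩ interior (convexHull ℝ (Set.range v))).Nonempty :=
  stmt_13_general d v hv t H hH hmeet hnotcont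
end
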